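/- Let (I_•, τ) be the admissible pair of type BII: I of type B_n (n ≥ 2), I_• = {2,…,n}, τ = id. Then ϖ_i + w_•ϖ_i = 2ϖ₁ for i ≠ n, and ϖ_n + w_•ϖ_n = ϖ₁; consequently ν + w_•ν ∈ Z_{≥0}·ϖ₁ for every dominant weight ν. -/
import Mathlib


/-- Type BII (`I` of type `B_n`, `n ≥ 2`, `I_• = {2,…,n}`,
`τ = id`).  Realizing the weights in `ℚ^n` (`0`-indexed coordinates, with
`ϖ_i = e_1 + ⋯ + e_i` for `i < n` and `ϖ_n = (e_1 + ⋯ + e_n)/2`), the longest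
element `w_•` of the parabolic `W_{I_•}` of type `B_{n-1}` fixes the first
coordinate and acts by `-1` on the others.  Then `ϖ_i + w_•ϖ_i = 2ϖ₁` for
`i ≠ n`, `ϖ_n + w_•ϖ_n = ϖ₁`, and consequently `ν + w_•ν ∈ ℤ_{≥0}·ϖ₁` for
every dominant `ν = Σ cᵢ ϖᵢ`. -/
theorem stmt_19 (n : ℕ) (hn : 2 ≤ n)
    (ϖ : Fin n → (Fin n → ℚ))
    (hϖ : ∀ i : Fin n, ϖ i =
      if (i : ℕ) = n - 1 then (fun _ : Fin n => (1 : ℚ) / 2)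
      else fun k : Fin n => if (k : ℕ) ≤ (i : ℕ) then (1 : ℚ) else 0)
    (w : (Fin n → ℚ) → (Fin n → ℚ))
    (hw : ∀ (f : Fin n → ℚ) (k : Fin n),
      w f k = if (k : ℕ) = 0 then f k else - f k) :
    (∀ i : Fin n, (i : ℕ) ≠ n - 1 →
        ϖ i + w (ϖ i) = (2 : ℚ) • ϖ ⟨0, by omega⟩) ∧
      (ϖ ⟨n - 1, by omega⟩ + w (ϖ ⟨n - 1, by omega⟩) = ϖ ⟨0, by omega⟩) ∧
      ∀ c : Fin n → ℕ, ∃ m : ℕ,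
        (∑ i, (c i : ℚ) • ϖ i) + w (∑ i, (c i : ℚ) • ϖ i)
          = (m : ℚ) • ϖ ⟨0, by omega⟩ := by
  have h0ne : (0 : ℕ) ≠ n - 1 := by omega
  have hϖ0 : ϖ ⟨0, by omega⟩ = fun k : Fin n => if (k : ℕ) ≤ 0 then (1:ℚ) else 0 := by
    rw [hϖ]; simp [h0ne]
  refine ⟨?_, ?_, ?_⟩
  · intro i hi
    funext k
    simp only [Pi.add_apply, hw, Pi.smul_apply, hϖ0, hϖ i, if_neg hi, smul_eq_mul]
    by_cases hk : (k : ℕ) = 0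
    · simp [hk]; norm_num
    · have : ¬ (k:ℕ) ≤ 0 := by omega
      simp [hk, this]
  · funext k
    simp only [Pi.add_apply, hw, hϖ0, hϖ]
    by_cases hk : (k : ℕ) = 0
    · simp [hk]; norm_num
    · have : ¬ (k:ℕ) ≤ 0 := by omega
      simp [hk, this]
  · intro c
    refine ⟨∑ i : Fin n, (if (i:ℕ) = n - 1 then c i else 2 * c i), ?_⟩
    funext k
    simp only [Pi.add_apply, hw, Finset.sum_apply, Pi.smul_apply, hϖ0, smul_eq_mul]
    by_cases hk : (k : ℕ) = 0
    · simp only [hk, if_pos (le_refl 0), mul_one, if_pos]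
      push_cast
      rw [Finset.sum_add_distrib.symm  ]
      refine Finset.sum_congr rfl fun i _ => ?_
      rw [hϖ i]
      by_cases hi : (i:ℕ) = n - 1
      · simp [hi]; ring
      · simp [hi, hk]; ring
    · have hk' : ¬ (k:ℕ) ≤ 0 := by omega
      simp only [hk', if_neg, if_neg hk, mul_zero]
      simp
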